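/- arXiv:1810.03467 — 6 statements merged into one kernel-verified Lean document; each statement's English description precedes it below -/
import Mathlib

section
/- Let G be a group of square-free order n = p_1 ⋯ p_ℓ with the p_i distinct primes. Then G embeds into a symmetric group on p_1 + ⋯ + p_ℓ points, i.e., G has a faithful permutation representation of degree p_1 + ⋯ + p_ℓ. -/
universe u

open Subgroup Equiv

/-- A monoid hom between permutation groups induced by an equiv of the underlying types. -/
def permCongrHom {α β : Type*} (e : α ≃ β) : Equiv.Perm α →* Equiv.Perm β where
  toFun := e.permCongr
  map_one' := by ext b; simp
  map_mul' x y := by ext b; simp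

lemma permCongrHom_injective {α β : Type*} (e : α ≃ β) :
    Function.Injective (_root_.permCongrHom e) := e.permCongr.injective

lemma card_sylow_eq {G : Type u} [Group G] [Finite G] {p : ℕ} [Fact p.Prime]
    (hsq : Squarefree (Nat.card G)) (hp : p ∣ Nat.card G) (P : Sylow p G) :
    Nat.card P = p := by
  rw [Sylow.card_eq_multiplicity]
  have h1 : (Nat.card G).factorization p ≤ 1 := hsq.natFactorization_le_one p
  have h2 : 0 < (Nat.card G).factorization p :=
    Nat.Prime.factorization_pos_of_dvd Fact.out (Nat.card_pos.ne') hp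
  rw [le_antisymm h1 h2, pow_one]

lemma norm_le_cent {G : Type u} [Group G] [Finite G] {p : ℕ} [Fact p.Prime]
    (hsq : Squarefree (Nat.card G)) (hd : p ∣ Nat.card G)
    (hmin : ∀ q : ℕ, q.Prime → q ∣ Nat.card G → p ≤ q) (P : Sylow p G) :
    Subgroup.normalizer ((P : Subgroup G) : Set G) ≤ Subgroup.centralizer (P : Set G) := by
  have hp : p.Prime := Fact.out
  have hcard : Nat.card P = p := card_sylow_eq hsq hd P
  have hcyc : IsCyclic P := isCyclic_of_prime_card hcard
  have haut : Nat.card (MulAut P) = p - 1 := by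
    rw [IsCyclic.card_mulAut, hcard, Nat.totient_prime hp]
  intro x hx
  have hker : (⟨x, hx⟩ : Subgroup.normalizer ((P : Subgroup G) : Set G)) ∈
      (P : Subgroup G).normalizerMonoidHom.ker := by
    show (P : Subgroup G).normalizerMonoidHom ⟨x, hx⟩ = 1
    rw [← orderOf_eq_one_iff]
    set d := orderOf ((P : Subgroup G).normalizerMonoidHom ⟨x, hx⟩) with hdd
    by_contra hd1
    have hdvd1 : d ∣ p - 1 := haut ▸ orderOf_dvd_natCard _
    have hdvd2 : d ∣ Nat.card G := by
      refine dvd_trans (dvd_trans (orderOf_map_dvd _ _) (orderOf_dvd_natCard _)) ?_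
      exact Subgroup.card_subgroup_dvd_card _
    set q := d.minFac with hq
    have hqp : q.Prime := Nat.minFac_prime hd1
    have hq1 : q ∣ p - 1 := dvd_trans (Nat.minFac_dvd d) hdvd1
    have hq2 : p ≤ q := hmin q hqp (dvd_trans (Nat.minFac_dvd d) hdvd2)
    have h2p : 2 ≤ p := hp.two_le
    have hple : q ≤ p - 1 := Nat.le_of_dvd (by omega) hq1
    omega
  rw [Subgroup.normalizerMonoidHom_ker, Subgroup.mem_subgroupOf] at hker
  exact hker

lemma sylow_max_normal : ∀ (n : ℕ) (G : Type u) [Group G] [Finite G],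
    Nat.card G = n → Squarefree n → ∀ p : ℕ, p.Prime → p ∣ n →
    (∀ q : ℕ, q.Prime → q ∣ n → q ≤ p) → ∀ P : Sylow p G, (P : Subgroup G).Normal := by
  intro n
  induction n using Nat.strong_induction_on with
  | _ n IH =>
  intro G _ _ hcard hsq p hp hdvd hmax P
  subst hcard
  have := Fact.mk hp
  have hn0 : Nat.card G ≠ 0 := Nat.card_pos.ne'
  have hn1 : Nat.card G ≠ 1 := by
    intro h1
    exact hp.one_lt.ne' (Nat.eq_one_of_dvd_one (h1 ▸ hdvd))
  set r := (Nat.card G).minFac with hrdef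
  have hr : r.Prime := Nat.minFac_prime hn1
  have hrdvd : r ∣ Nat.card G := Nat.minFac_dvd _
  have hPcard : Nat.card P = p := card_sylow_eq hsq hdvd P
  rcases eq_or_ne r p with hrp | hrp
  · -- all prime factors equal p, so Nat.card G = p and P = ⊤
    have hpf : (Nat.card G).primeFactors = {p} := by
      ext q
      simp only [Nat.mem_primeFactors, Finset.mem_singleton]
      constructor
      · rintro ⟨hq, hqd, -⟩
        exact le_antisymm (hmax q hq hqd) (hrp ▸ Nat.minFac_le_of_dvd hq.two_le hqd)
      · rintro rfl
        exact ⟨hp, hdvd, hn0⟩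
    have hnp : Nat.card G = p := by
      have := Nat.prod_primeFactors_of_squarefree hsq
      rw [hpf, Finset.prod_singleton] at this
      omega
    have htop : (P : Subgroup G) = ⊤ := by
      apply Subgroup.eq_top_of_card_eq
      rw [hPcard, hnp]
    rw [htop]
    infer_instance
  · have hrlt : r < p := lt_of_le_of_ne (hmax r hr hrdvd) hrp
    obtain ⟨R⟩ : Nonempty (Sylow r G) := inferInstance
    have := Fact.mk hr
    have hP : Subgroup.normalizer ((R : Subgroup G) : Set G) ≤ Subgroup.centralizer (R : Set G) :=
      norm_le_cent hsq hrdvd (fun q hq hqd => Nat.minFac_le_of_dvd hq.two_le hqd) R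
    set N := (MonoidHom.transferSylow R hP).ker with hN
    have hcomp : IsComplement' N R := MonoidHom.ker_transferSylow_isComplement' R hP
    have hRcard : Nat.card R = r := card_sylow_eq hsq hrdvd R
    have hNcard : Nat.card N * r = Nat.card G := by
      rw [← hRcard]; exact hcomp.card_mul
    have hNpos : Nat.card N ≠ 0 := Nat.card_pos.ne'
    have hlt : Nat.card N < Nat.card G := by
      have : 2 ≤ r := hr.two_le
      nlinarith [Nat.card_pos (α := N)]
    have hNdvd : Nat.card N ∣ Nat.card G := Dvd.intro r hNcard
    have hsqN : Squarefree (Nat.card N) := hsq.squarefree_of_dvd hNdvd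
    have hpN : p ∣ Nat.card N := by
      rcases (Nat.Prime.dvd_mul hp).mp (hNcard ▸ hdvd) with h | h
      · exact h
      · exact absurd ((Nat.prime_dvd_prime_iff_eq hp hr).mp h).symm hrp
    have hmaxN : ∀ q : ℕ, q.Prime → q ∣ Nat.card N → q ≤ p :=
      fun q hq hqd => hmax q hq (hqd.trans hNdvd)
    obtain ⟨Q⟩ : Nonempty (Sylow p N) := inferInstance
    have hQn : (Q : Subgroup N).Normal :=
      IH (Nat.card N) hlt N rfl hsqN p hp hpN hmaxN Q
    have hQchar : (Q : Subgroup N).Characteristic := Sylow.characteristic_of_normal Q hQn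
    have hQcard : Nat.card Q = p := card_sylow_eq hsqN hpN Q
    set S : Subgroup G := (Q : Subgroup N).map N.subtype with hSdef
    have hSnorm : S.Normal := ConjAct.normal_of_characteristic_of_normal
    have hScard : Nat.card S = p := by
      rw [← hQcard]
      exact (Nat.card_congr (Subgroup.equivMapOfInjective _ _ N.subtype_injective).toEquiv).symm
    have hSp : IsPGroup p S := IsPGroup.of_card (by rw [hScard, pow_one])
    obtain ⟨P₂, hle⟩ := hSp.exists_le_sylow
    have hP₂card : Nat.card P₂ = p := card_sylow_eq hsq hdvd P₂
    have hSP₂ : S = (P₂ : Subgroup G) :=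
      Subgroup.eq_of_le_of_card_ge hle (by rw [hP₂card, hScard])
    have hP₂norm : (P₂ : Subgroup G).Normal := hSP₂ ▸ hSnorm
    haveI := Sylow.unique_of_normal P₂ hP₂norm
    have : P = P₂ := Subsingleton.elim P P₂
    rw [this]
    exact hP₂norm

lemma squarefree_faithful_aux : ∀ (n : ℕ) (G : Type u) [Group G] [Finite G],
    Nat.card G = n → Squarefree n →
    ∃ f : G →* Equiv.Perm (Fin (∑ p ∈ n.primeFactors, p)), Function.Injective f := by
  intro n
  induction n using Nat.strong_induction_on with
  | _ n IH =>
  intro G _ _ hcard hsq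
  subst hcard
  have hn0 : Nat.card G ≠ 0 := Nat.card_pos.ne'
  rcases eq_or_ne (Nat.card G) 1 with hn1 | hn1
  · haveI : Subsingleton G := (Nat.card_eq_one_iff_unique.mp hn1).1
    exact ⟨1, fun a b _ => Subsingleton.elim a b⟩
  -- let p be the largest prime factor
  have hne : (Nat.card G).primeFactors.Nonempty :=
    Nat.nonempty_primeFactors.mpr (by omega)
  set p := (Nat.card G).primeFactors.max' hne with hpdef
  have hpmem : p ∈ (Nat.card G).primeFactors := Finset.max'_mem _ hne
  have hp : p.Prime := Nat.prime_of_mem_primeFactors hpmem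
  have hdvd : p ∣ Nat.card G := Nat.dvd_of_mem_primeFactors hpmem
  have hmax : ∀ q : ℕ, q.Prime → q ∣ Nat.card G → q ≤ p := fun q hq hqd =>
    Finset.le_max' _ q (Nat.mem_primeFactors.mpr ⟨hq, hqd, hn0⟩)
  have := Fact.mk hp
  obtain ⟨P⟩ : Nonempty (Sylow p G) := inferInstance
  haveI hPnorm : (P : Subgroup G).Normal :=
    sylow_max_normal (Nat.card G) G rfl hsq p hp hdvd hmax P
  have hPcard : Nat.card P = p := card_sylow_eq hsq hdvd P
  set m := (P : Subgroup G).index with hmdef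
  have hpm : p * m = Nat.card G := by
    rw [← hPcard]; exact Subgroup.card_mul_index _
  have hm0 : m ≠ 0 := by
    intro h; rw [h, mul_zero] at hpm; exact hn0 hpm.symm
  have hpnm : ¬ p ∣ m := by
    intro hdm
    obtain ⟨k, hk⟩ := hdm
    exact hp.one_lt.ne' (Nat.isUnit_iff.mp (hsq p (⟨k, by rw [← hpm, hk]; ring⟩)))
  -- Schur-Zassenhaus complement
  obtain ⟨Q, hQ⟩ := Subgroup.exists_right_complement'_of_coprime
    (N := (P : Subgroup G)) (by
      rw [hPcard, ← hmdef]
      exact (Nat.Prime.coprime_iff_not_dvd hp).mpr hpnm)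
  have hQindex : Nat.card (G ⧸ Q) = p := by
    rw [← Subgroup.index_eq_card, hQ.index_eq_card, hPcard]
  -- degree-p action on G ⧸ Q
  let e : (G ⧸ Q) ≃ Fin p := Finite.equivFinOfCardEq hQindex
  let ψ : G →* Equiv.Perm (Fin p) :=
    (_root_.permCongrHom e).comp (MulAction.toPermHom G (G ⧸ Q))
  -- faithful rep of the quotient by induction
  have hmlt : m < Nat.card G := by
    have h2 : 2 ≤ p := hp.two_le
    nlinarith [Nat.pos_of_ne_zero hm0]
  have hmsq : Squarefree m := hsq.squarefree_of_dvd ⟨p, by rw [← hpm]; ring⟩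
  have hGPcard : Nat.card (G ⧸ (P : Subgroup G)) = m := (Subgroup.index_eq_card _).symm
  obtain ⟨f', hf'⟩ := IH m hmlt (G ⧸ (P : Subgroup G)) hGPcard hmsq
  let φ : G →* Equiv.Perm (Fin (∑ q ∈ m.primeFactors, q)) :=
    f'.comp (QuotientGroup.mk' (P : Subgroup G))
  -- sum bookkeeping
  have hsum : (∑ q ∈ (Nat.card G).primeFactors, q)
      = p + ∑ q ∈ m.primeFactors, q := by
    have h1 : (Nat.card G).primeFactors = insert p m.primeFactors := by
      rw [← hpm, Nat.primeFactors_mul hp.ne_zero hm0, hp.primeFactors,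
        ← Finset.insert_eq]
    rw [h1, Finset.sum_insert (fun hmem => hpnm (Nat.dvd_of_mem_primeFactors hmem))]
  rw [hsum]
  refine ⟨(_root_.permCongrHom finSumFinEquiv).comp
    ((Equiv.Perm.sumCongrHom (Fin p) (Fin (∑ q ∈ m.primeFactors, q))).comp (ψ.prod φ)), ?_⟩
  rw [injective_iff_map_eq_one]
  intro x hx
  simp only [MonoidHom.comp_apply] at hx
  have h1 : Equiv.Perm.sumCongrHom _ _ ((ψ.prod φ) x) = 1 := by
    apply permCongrHom_injective finSumFinEquiv
    rw [hx, map_one]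
  have h2 : (ψ.prod φ) x = 1 := Equiv.Perm.sumCongrHom_injective (by rw [h1, map_one])
  have hψ : ψ x = 1 := congrArg Prod.fst h2
  have hφ : φ x = 1 := congrArg Prod.snd h2
  -- from hφ : x ∈ P
  have hxP : x ∈ (P : Subgroup G) := by
    have : QuotientGroup.mk' (P : Subgroup G) x = 1 :=
      (injective_iff_map_eq_one f').mp hf' _ hφ
    rwa [← QuotientGroup.ker_mk' (P : Subgroup G)]
  -- from hψ : x ∈ Q
  have hxQ : x ∈ Q := by
    have hker : MulAction.toPermHom G (G ⧸ Q) x = 1 := by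
      apply permCongrHom_injective e
      rw [map_one]
      exact hψ
    have : x ∈ Q.normalCore := by
      rw [Subgroup.normalCore_eq_ker]
      exact hker
    exact Q.normalCore_le this
  exact Subgroup.disjoint_def.mp hQ.disjoint hxP hxQ

/-- A group of square-free order `n = p₁ ⋯ p_ℓ` has a faithful permutation
representation on `p₁ + ⋯ + p_ℓ` points. -/
theorem squarefree_faithful_perm_rep (G : Type*) [Group G] [Finite G]
    (h : Squarefree (Nat.card G)) :
    ∃ f : G →* Equiv.Perm (Fin (∑ p ∈ (Nat.card G).primeFactors, p)),
      Function.Injective f :=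
  squarefree_faithful_aux (Nat.card G) G rfl h
end

section
/- If G ≅ C_a ⋉ C_b with a square-free, then there is a divisor d of a and a subgroup C_e ≤ C_b such that G ≅ C_d ⋉ C_e × C_f where in the decomposition C_a = C_d × Z, Z is the centralizer of C_b in C_a; in particular G is isomorphic to a semidirect product C_d ⋉ C_b in which C_d acts faithfully on C_b, times a cyclic group. -/
/-- Transport a semidirect product along an isomorphism of the acting group. -/
def sdpCongrRight {N G H : Type*} [Group N] [Group G] [Group H]
    (φ : G →* MulAut N) (e : G ≃* H) :
    SemidirectProduct N G φ ≃* SemidirectProduct N H (φ.comp e.symm.toMonoidHom) where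
  toFun x := ⟨x.1, e x.2⟩
  invFun x := ⟨x.1, e.symm x.2⟩
  left_inv x := by ext <;> simp
  right_inv x := by ext <;> simp
  map_mul' x y := by ext <;> simp only [SemidirectProduct.mul_left, SemidirectProduct.mul_right] <;> simp

/-- If the second factor of the acting group acts trivially, it splits off as a direct factor. -/
def sdpProdTrivial {N G H : Type*} [Group N] [Group G] [Group H]
    (φ : G × H →* MulAut N) (hH : ∀ h : H, φ (1, h) = 1) :
    SemidirectProduct N (G × H) φ ≃*
      (SemidirectProduct N G (φ.comp (MonoidHom.inl G H))) × H where
  toFun x := (⟨x.1, x.2.1⟩, x.2.2)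
  invFun x := ⟨x.1.1, (x.1.2, x.2)⟩
  left_inv x := by ext <;> simp
  right_inv x := by ext <;> simp
  map_mul' x y := by
    refine Prod.ext (SemidirectProduct.ext ?_ rfl) rfl
    show x.1 * φ x.2 y.1 = x.1 * φ (x.2.1, 1) y.1
    have h2 : φ x.2 = φ (x.2.1, 1) := by
      conv_lhs => rw [show x.2 = (x.2.1, 1) * (1, x.2.2) by simp]
      rw [map_mul, hH, mul_one]
    rw [h2]

/-- If `G ≅ C_a ⋉ C_b` with `a` square-free, then `G ≅ (C_d ⋉ C_b) × C_f` where `d ∣ a`,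
`f ∣ a`, `d * f = a`, and `C_d` acts faithfully on `C_b`. -/
theorem squarefree_semidirect_faithful_factor (a b : ℕ) (hsf : Squarefree a)
    (φ : Multiplicative (ZMod a) →* MulAut (Multiplicative (ZMod b))) :
    ∃ (d f : ℕ), d ∣ a ∧ f ∣ a ∧ d * f = a ∧
      ∃ ψ : Multiplicative (ZMod d) →* MulAut (Multiplicative (ZMod b)),
        Function.Injective ψ ∧
        Nonempty ((SemidirectProduct (Multiplicative (ZMod b)) (Multiplicative (ZMod a)) φ) ≃*
          (SemidirectProduct (Multiplicative (ZMod b)) (Multiplicative (ZMod d)) ψ ×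
            Multiplicative (ZMod f))) := by
  have ha : a ≠ 0 := hsf.ne_zero
  haveI : NeZero a := ⟨ha⟩
  set K := φ.ker with hK
  have hcard_a : Nat.card (Multiplicative (ZMod a)) = a := by
    rw [Nat.card_congr Multiplicative.toAdd, Nat.card_zmod]
  set f := Nat.card K with hf
  have hfa : f ∣ a := hcard_a ▸ Subgroup.card_subgroup_dvd_card K
  have hfne : f ≠ 0 := by
    have : Nat.card K ≠ 0 := Nat.card_pos.ne'
    simpa [hf] using this
  set d := a / f with hd
  have hdf : d * f = a := Nat.div_mul_cancel hfa
  have hda : d ∣ a := ⟨f, hdf.symm⟩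
  have hdne : d ≠ 0 := by
    intro h; rw [h, zero_mul] at hdf; exact ha hdf.symm
  haveI : NeZero f := ⟨hfne⟩
  haveI : NeZero d := ⟨hdne⟩
  have hco : Nat.Coprime d f := Nat.coprime_of_squarefree_mul (by rwa [hdf])
  let e1 : ZMod a ≃+ ZMod d × ZMod f := by
    rw [← hdf]; exact (ZMod.chineseRemainder hco).toAddEquiv
  let em : Multiplicative (ZMod a) ≃*
      Multiplicative (ZMod d) × Multiplicative (ZMod f) :=
    (AddEquiv.toMultiplicative e1).trans (MulEquiv.prodMultiplicative _ _)
  let Kf : Subgroup (Multiplicative (ZMod d) × Multiplicative (ZMod f)) :=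
    (⊥ : Subgroup (Multiplicative (ZMod d))).prod ⊤
  -- K ≤ image of Kf under em.symm
  have hle : K ≤ Kf.map em.symm.toMonoidHom := by
    intro g hg
    have hord : orderOf g ∣ f := K.orderOf_dvd_natCard hg
    have hgf : g ^ f = 1 := orderOf_dvd_iff_pow_eq_one.mp hord
    have hx : (em g).1 ^ f = 1 := by
      have : (em g) ^ f = 1 := by rw [← map_pow, hgf, map_one]
      exact congrArg Prod.fst this
    have hx0 : (em g).1 = 1 := by
      have hmul : (f : ZMod d) * Multiplicative.toAdd (em g).1 = 0 := by
        have := congrArg Multiplicative.toAdd hx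
        simpa [toAdd_pow, nsmul_eq_mul] using this
      have hunit : IsUnit (f : ZMod d) :=
        (ZMod.isUnit_iff_coprime f d).mpr hco.symm
      have h0 := hunit.mul_right_eq_zero.mp hmul
      exact Multiplicative.toAdd.injective (by rw [h0, toAdd_one])
    refine ⟨(1, (em g).2), ?_, ?_⟩
    · exact Subgroup.mem_prod.mpr ⟨Subgroup.mem_bot.mpr rfl, trivial⟩
    · have : em g = (1, (em g).2) := Prod.ext hx0 rfl
      calc em.symm ((1, (em g).2)) = em.symm (em g) := by rw [← this]
        _ = g := em.symm_apply_apply g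
  -- cardinalities agree
  have hcardKf : Nat.card (Kf.map em.symm.toMonoidHom) = f := by
    rw [Nat.card_congr (Kf.equivMapOfInjective em.symm.toMonoidHom em.symm.injective).symm.toEquiv]
    have : Nat.card Kf = Nat.card (⊥ : Subgroup (Multiplicative (ZMod d))) *
        Nat.card (⊤ : Subgroup (Multiplicative (ZMod f))) := by
      rw [Nat.card_congr (Subgroup.prodEquiv _ _).toEquiv, Nat.card_prod]
    rw [this, Subgroup.card_bot, Subgroup.card_top, one_mul,
      Nat.card_congr Multiplicative.toAdd, Nat.card_zmod]
  have hKeq : K = Kf.map em.symm.toMonoidHom :=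
    Subgroup.eq_of_le_of_card_ge hle (le_of_eq (hcardKf.trans hf))
  -- the action and its restriction
  let ψ' : Multiplicative (ZMod d) × Multiplicative (ZMod f) →*
      MulAut (Multiplicative (ZMod b)) := φ.comp em.symm.toMonoidHom
  have htriv : ∀ h : Multiplicative (ZMod f), ψ' (1, h) = 1 := by
    intro h
    have hmem : em.symm (1, h) ∈ K := by
      rw [hKeq]
      exact ⟨(1, h), Subgroup.mem_prod.mpr ⟨Subgroup.mem_bot.mpr rfl, trivial⟩, rfl⟩
    exact hmem
  let ψ : Multiplicative (ZMod d) →* MulAut (Multiplicative (ZMod b)) :=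
    ψ'.comp (MonoidHom.inl _ _)
  have hinj : Function.Injective ψ := by
    rw [injective_iff_map_eq_one]
    intro x hx
    have hmem : em.symm (x, 1) ∈ K := hx
    rw [hKeq] at hmem
    obtain ⟨k, hk, hek⟩ := hmem
    have : k = (x, 1) := em.symm.injective hek
    rw [this] at hk
    exact Subgroup.mem_bot.mp (Subgroup.mem_prod.mp hk).1
  exact ⟨d, f, hda, hfa, hdf, ψ, hinj,
    ⟨(sdpCongrRight φ em).trans (sdpProdTrivial ψ' htriv)⟩⟩
end

section
/- Let G be a finite group and let U ≤ V be normal subgroups of G such that G/U = K/U × V/U is an (internal) direct product for some U ≤ K ≤ G. Then K/U is contained in C/U = C_{G/U}(V/U) and K/U is a complement to the center Z(V/U) in C/U. -/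
/-- If `G/U = K/U × V/U` is an internal direct product (with `U ≤ V`, `U ≤ K` and `U`, `V`
normal), then `K/U` lies in `C/U = C_{G/U}(V/U)` and is a complement to `Z(V/U)` in `C/U`. -/
theorem direct_factor_complement_of_center (G : Type*) [Group G] (U V K : Subgroup G)
    [U.Normal] [V.Normal] (hUV : U ≤ V) (hUK : U ≤ K)
    (hKn : (K.map (QuotientGroup.mk' U)).Normal)
    (hmeet : K.map (QuotientGroup.mk' U) ⊓ V.map (QuotientGroup.mk' U) = ⊥)
    (hjoin : K.map (QuotientGroup.mk' U) ⊔ V.map (QuotientGroup.mk' U) = ⊤) :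
    K.map (QuotientGroup.mk' U) ≤
      Subgroup.centralizer (V.map (QuotientGroup.mk' U) : Set (G ⧸ U)) ∧
    K.map (QuotientGroup.mk' U) ⊓
      (Subgroup.centralizer (V.map (QuotientGroup.mk' U) : Set (G ⧸ U)) ⊓
        V.map (QuotientGroup.mk' U)) = ⊥ ∧
    K.map (QuotientGroup.mk' U) ⊔
      (Subgroup.centralizer (V.map (QuotientGroup.mk' U) : Set (G ⧸ U)) ⊓
        V.map (QuotientGroup.mk' U)) =
      Subgroup.centralizer (V.map (QuotientGroup.mk' U) : Set (G ⧸ U)) := by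
  set K' := K.map (QuotientGroup.mk' U) with hK'
  set V' := V.map (QuotientGroup.mk' U) with hV'
  have hVn : V'.Normal :=
    Subgroup.Normal.map ‹V.Normal› _ (QuotientGroup.mk'_surjective U)
  have hle : K' ≤ Subgroup.centralizer (V' : Set (G ⧸ U)) := by
    intro k hk
    rw [Subgroup.mem_centralizer_iff]
    intro v hv
    exact (Subgroup.commute_of_normal_of_disjoint K' V' hKn hVn
      (disjoint_iff.mpr hmeet) k v hk hv).symm.eq
  refine ⟨hle, ?_, ?_⟩
  · rw [eq_bot_iff, ← hmeet]
    exact le_inf inf_le_left (le_trans inf_le_right inf_le_right)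
  · apply le_antisymm
    · exact sup_le hle (le_trans inf_le_left le_rfl)
    · intro c hc
      have : c ∈ (⊤ : Subgroup (G ⧸ U)) := trivial
      rw [← hjoin, ← SetLike.mem_coe, Subgroup.mul_normal K' V'] at this
      obtain ⟨k, hk, v, hv, rfl⟩ := this
      have hvC : v ∈ Subgroup.centralizer (V' : Set (G ⧸ U)) := by
        have : v = k⁻¹ * (k * v) := by group
        rw [this]
        exact Subgroup.mul_mem _ (Subgroup.inv_mem _ (hle hk)) hc
      exact Subgroup.mul_mem _ (Subgroup.mem_sup_left hk)
        (Subgroup.mem_sup_right ⟨hvC, hv⟩)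
end

section
/- Let G be a group, p and q distinct primes, P ≤ G a p-subgroup of order dividing p^2, and Q = ⟨w⟩ ≤ G cyclic of order q^2, with PQ = QP a subgroup and A = ⟨w^q⟩ normal in PQ. If PQ = Q ⋉ P (i.e., P is normal in PQ), then A acts trivially on P by conjugation. -/
open Pointwise

/-- Let `P` be a `p`-subgroup of order dividing `p^2` and `Q = ⟨w⟩` cyclic of order `q^2`
(`p ≠ q` primes), with `PQ = QP` a subgroup, `P` normal in `PQ` and `A = ⟨w^q⟩` normal in
`PQ`. If `PQ = Q ⋉ P`, then `A` acts trivially on `P` by conjugation. -/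
theorem subgroup_A_acts_trivially (G : Type*) [Group G] (p q : ℕ) (hp : p.Prime)
    (hq : q.Prime) (hpq : p ≠ q) (P : Subgroup G) (hPcard : Nat.card P ∣ p ^ 2)
    (hPp : IsPGroup p P) (w : G) (hw : orderOf w = q ^ 2)
    (hPQ : (P : Set G) * (Subgroup.zpowers w : Set G) =
      (Subgroup.zpowers w : Set G) * (P : Set G))
    (hPn : (P.subgroupOf (P ⊔ Subgroup.zpowers w)).Normal)
    (hAn : ((Subgroup.zpowers (w ^ q)).subgroupOf (P ⊔ Subgroup.zpowers w)).Normal) :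
    ∀ a ∈ Subgroup.zpowers (w ^ q), ∀ x ∈ P, Commute a x := by
  intro a ha x hx
  set J := P ⊔ Subgroup.zpowers w with hJ
  have hAQ : Subgroup.zpowers (w ^ q) ≤ Subgroup.zpowers w :=
    Subgroup.zpowers_le.mpr ⟨(q : ℤ), zpow_natCast w q⟩
  have haJ : a ∈ J := Subgroup.mem_sup_right (hAQ ha)
  have hxJ : x ∈ J := Subgroup.mem_sup_left hx
  set c := a * x * a⁻¹ * x⁻¹ with hc
  -- c ∈ P
  have hcP : c ∈ P := by
    have h1 : (⟨a, haJ⟩ : J) * ⟨x, hxJ⟩ * (⟨a, haJ⟩ : J)⁻¹ ∈ P.subgroupOf J :=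
      hPn.conj_mem ⟨x, hxJ⟩ (by simpa [Subgroup.mem_subgroupOf] using hx) ⟨a, haJ⟩
    have h2 : a * x * a⁻¹ ∈ P := by simpa [Subgroup.mem_subgroupOf] using h1
    exact P.mul_mem h2 (P.inv_mem hx)
  -- c ∈ A
  have hcA : c ∈ Subgroup.zpowers (w ^ q) := by
    have h1 : (⟨x, hxJ⟩ : J) * ⟨a⁻¹, J.inv_mem haJ⟩ * (⟨x, hxJ⟩ : J)⁻¹ ∈
        (Subgroup.zpowers (w ^ q)).subgroupOf J :=
      hAn.conj_mem ⟨a⁻¹, J.inv_mem haJ⟩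
        (by simpa [Subgroup.mem_subgroupOf] using (Subgroup.zpowers (w ^ q)).inv_mem ha)
        ⟨x, hxJ⟩
    have h2 : x * a⁻¹ * x⁻¹ ∈ Subgroup.zpowers (w ^ q) := by
      simpa [Subgroup.mem_subgroupOf] using h1
    have : a * (x * a⁻¹ * x⁻¹) ∈ Subgroup.zpowers (w ^ q) :=
      (Subgroup.zpowers (w ^ q)).mul_mem ha h2
    simpa [hc, mul_assoc] using this
  -- order of c divides p^2
  have hop : orderOf c ∣ p ^ 2 := (Subgroup.orderOf_dvd_natCard P hcP).trans hPcard
  -- order of c divides q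
  have howq : orderOf (w ^ q) ∣ q := by
    apply orderOf_dvd_of_pow_eq_one
    rw [← pow_mul, ← pow_two, ← hw, pow_orderOf_eq_one]
  have hoq : orderOf c ∣ q := (orderOf_dvd_of_mem_zpowers hcA).trans howq
  -- coprimality forces c = 1
  have hcop : Nat.Coprime (p ^ 2) q :=
    (Nat.coprime_primes hp hq).mpr hpq |>.pow_left 2
  have hc1 : c = 1 := orderOf_eq_one_iff.mp (Nat.eq_one_of_dvd_coprimes hcop hop hoq)
  have h2 : a * x * a⁻¹ * x⁻¹ = 1 := hc1
  rw [mul_inv_eq_one] at h2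
  exact mul_inv_eq_iff_eq_mul.mp h2
end

section
/- Let p be an odd prime and K ≤ GL_2(𝔽_p) an abelian irreducible subgroup of order coprime to p. Then K is cyclic, and is conjugate to a subgroup of a Singer cycle, i.e., of a cyclic subgroup of GL_2(𝔽_p) of order p^2 − 1. -/
open Matrix

lemma ch2 {F : Type*} [CommRing F] (A : Matrix (Fin 2) (Fin 2) F) :
    A * A = (A 0 0 + A 1 1) • A - A.det • 1 := by
  ext i j
  fin_cases i <;> fin_cases j <;>
    simp [Matrix.mul_apply, Fin.sum_univ_two, Matrix.det_fin_two, Matrix.one_apply] <;> ring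

lemma scalar_of_entries {F : Type*} [CommRing F] (A : Matrix (Fin 2) (Fin 2) F)
    (h1 : A 0 1 = 0) (h2 : A 1 0 = 0) (h3 : A 0 0 = A 1 1) : A = A 0 0 • 1 := by
  ext i j
  fin_cases i <;> fin_cases j <;> simp [Matrix.one_apply, h1, h2, ← h3]

lemma build2 {F : Type*} [CommRing F] (A B : Matrix (Fin 2) (Fin 2) F) (x y : F)
    (e00 : B 0 0 = x + y * A 0 0) (e01 : B 0 1 = y * A 0 1)
    (e10 : B 1 0 = y * A 1 0) (e11 : B 1 1 = x + y * A 1 1) :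
    B = x • 1 + y • A := by
  ext i j
  fin_cases i <;> fin_cases j <;> simp [Matrix.one_apply, e00, e01, e10, e11]

lemma commutant {F : Type*} [Field F] (A B : Matrix (Fin 2) (Fin 2) F)
    (hA : ¬ ∃ c : F, A = c • (1 : Matrix (Fin 2) (Fin 2) F)) (h : B * A = A * B) :
    ∃ x y : F, B = x • 1 + y • A := by
  have h00 := congrFun (congrFun h 0) 0
  have h01 := congrFun (congrFun h 0) 1
  have h10 := congrFun (congrFun h 1) 0
  have h11 := congrFun (congrFun h 1) 1
  simp only [Matrix.mul_apply, Fin.sum_univ_two] at h00 h01 h10 h11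
  by_cases hb : A 0 1 ≠ 0
  · refine ⟨B 0 0 - (B 0 1 / A 0 1) * A 0 0, B 0 1 / A 0 1, build2 A B _ _ ?_ ?_ ?_ ?_⟩
    · ring
    · field_simp
    · field_simp
      linear_combination -h00
    · field_simp
      linear_combination -h01
  · by_cases hc : A 1 0 ≠ 0
    · refine ⟨B 0 0 - (B 1 0 / A 1 0) * A 0 0, B 1 0 / A 1 0, build2 A B _ _ ?_ ?_ ?_ ?_⟩
      · ring
      · field_simp
        linear_combination h00
      · field_simp
      · field_simp
        linear_combination h10
    · push_neg at hb hc
      have hd : A 0 0 ≠ A 1 1 := fun hdd => hA ⟨A 0 0, scalar_of_entries A hb hc hdd⟩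
      have hsub : A 0 0 - A 1 1 ≠ 0 := sub_ne_zero_of_ne hd
      have hf : B 0 1 = 0 := by
        have : B 0 1 * (A 1 1 - A 0 0) = 0 := by
          linear_combination h01 - B 0 0 * hb + B 1 1 * hb
        rcases mul_eq_zero.mp this with h' | h'
        · exact h'
        · exact absurd (by linear_combination -h') hsub
      have hg : B 1 0 = 0 := by
        have : B 1 0 * (A 0 0 - A 1 1) = 0 := by
          linear_combination h10 - B 1 1 * hc + B 0 0 * hc
        exact (mul_eq_zero.mp this).resolve_right hsub
      refine ⟨B 0 0 - ((B 0 0 - B 1 1)/(A 0 0 - A 1 1)) * A 0 0,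
        (B 0 0 - B 1 1)/(A 0 0 - A 1 1), build2 A B _ _ ?_ ?_ ?_ ?_⟩
      · ring
      · rw [hb, hf]; ring
      · rw [hc, hg]; ring
      · field_simp
        ring
section Span

variable {F : Type*} [Field F] (A : Matrix (Fin 2) (Fin 2) F)

/-- The subring `F[A]` of `M₂(F)` spanned by `1` and `A`. -/
def spanRing : Subring (Matrix (Fin 2) (Fin 2) F) where
  carrier := {m | ∃ x y : F, m = x • 1 + y • A}
  zero_mem' := ⟨0, 0, by simp⟩
  one_mem' := ⟨1, 0, by simp⟩
  add_mem' := by rintro a b ⟨x, y, rfl⟩ ⟨x', y', rfl⟩; exact ⟨x + x', y + y', by module⟩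
  neg_mem' := by rintro a ⟨x, y, rfl⟩; exact ⟨-x, -y, by module⟩
  mul_mem' := by
    rintro a b ⟨x, y, rfl⟩ ⟨x', y', rfl⟩
    refine ⟨x * x' - y * y' * A.det, x * y' + y * x' + y * y' * (A 0 0 + A 1 1), ?_⟩
    simp only [add_mul, mul_add, Matrix.smul_mul, Matrix.mul_smul, one_mul, mul_one, ch2 A]
    module

lemma mem_spanRing {m : Matrix (Fin 2) (Fin 2) F} :
    m ∈ spanRing A ↔ ∃ x y : F, m = x • 1 + y • A := Iff.rfl

lemma spanRing_mul_comm (a b : spanRing A) : a * b = b * a := by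
  obtain ⟨a, ha⟩ := a
  obtain ⟨b, hb⟩ := b
  obtain ⟨x, y, rfl⟩ := ha
  obtain ⟨x', y', rfl⟩ := hb
  apply Subtype.ext
  show (x • 1 + y • A) * (x' • 1 + y' • A) = (x' • 1 + y' • A) * (x • 1 + y • A)
  simp only [add_mul, mul_add, Matrix.smul_mul, Matrix.mul_smul, one_mul, mul_one]
  module

/-- `F[A]` as a commutative ring. -/
def spanRingCommRing : CommRing (spanRing A) :=
  { (inferInstance : Ring (spanRing A)) with mul_comm := spanRing_mul_comm A }

/-- The subgroup of `GL₂(F)` of invertible matrices lying in `F[A]`. -/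
def singerSubgroup : Subgroup (Matrix.GeneralLinearGroup (Fin 2) F) where
  carrier := {g | (g : Matrix (Fin 2) (Fin 2) F) ∈ spanRing A}
  one_mem' := by
    show ((1 : Matrix.GeneralLinearGroup (Fin 2) F) : Matrix (Fin 2) (Fin 2) F) ∈ spanRing A
    rw [Units.val_one]
    exact (spanRing A).one_mem
  mul_mem' := by
    intro a b ha hb
    show ((a * b : Matrix.GeneralLinearGroup (Fin 2) F) :
      Matrix (Fin 2) (Fin 2) F) ∈ spanRing A
    rw [Units.val_mul]
    exact (spanRing A).mul_mem ha hb
  inv_mem' := by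
    intro g hg
    obtain ⟨x, y, hxy⟩ := hg
    set m : Matrix (Fin 2) (Fin 2) F := (g : Matrix (Fin 2) (Fin 2) F) with hmdef
    have hdm : m.det ≠ 0 := by
      intro h0
      have hu := (Matrix.isUnit_iff_isUnit_det m).mp g.isUnit
      rw [h0] at hu
      exact not_isUnit_zero hu
    have hmul : m * (m.det⁻¹ • ((m 0 0 + m 1 1) • 1 - m)) = 1 := by
      calc m * (m.det⁻¹ • ((m 0 0 + m 1 1) • 1 - m))
          = m.det⁻¹ • ((m 0 0 + m 1 1) • m - m * m) := by
            rw [Matrix.mul_smul, mul_sub, Matrix.mul_smul, mul_one]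
        _ = m.det⁻¹ • (m.det • 1) := by rw [ch2 m, sub_sub_cancel]
        _ = 1 := by rw [smul_smul, inv_mul_cancel₀ hdm, one_smul]
    have hinv : ((g⁻¹ : Matrix.GeneralLinearGroup (Fin 2) F) :
        Matrix (Fin 2) (Fin 2) F) = m.det⁻¹ • ((m 0 0 + m 1 1) • 1 - m) :=
      Units.inv_eq_of_mul_eq_one_right hmul
    show ((g⁻¹ : Matrix.GeneralLinearGroup (Fin 2) F) :
      Matrix (Fin 2) (Fin 2) F) ∈ spanRing A
    refine ⟨m.det⁻¹ * ((m 0 0 + m 1 1) - x), -(m.det⁻¹ * y), ?_⟩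
    rw [hinv, hxy]
    module

lemma mem_singerSubgroup {g : Matrix.GeneralLinearGroup (Fin 2) F} :
    g ∈ singerSubgroup A ↔ (g : Matrix (Fin 2) (Fin 2) F) ∈ spanRing A := Iff.rfl

end Span
/-- An abelian irreducible subgroup of `GL₂(𝔽_p)` of order coprime to `p` (`p` an odd
prime) is cyclic and conjugate to a subgroup of a Singer cycle. -/
theorem abelian_irreducible_in_singer (p : ℕ) [Fact p.Prime] (hodd : Odd p)
    (K : Subgroup (Matrix.GeneralLinearGroup (Fin 2) (ZMod p)))
    (hab : ∀ x ∈ K, ∀ y ∈ K, x * y = y * x)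
    (hcop : (Nat.card K).Coprime p)
    (hirr : ∀ W : Submodule (ZMod p) (Fin 2 → ZMod p),
      (∀ k ∈ K, ∀ v ∈ W,
        Matrix.mulVec (k : Matrix (Fin 2) (Fin 2) (ZMod p)) v ∈ W) → W = ⊥ ∨ W = ⊤) :
    IsCyclic K ∧
    ∃ S : Subgroup (Matrix.GeneralLinearGroup (Fin 2) (ZMod p)),
      IsCyclic S ∧ Nat.card S = p ^ 2 - 1 ∧
      ∃ g : Matrix.GeneralLinearGroup (Fin 2) (ZMod p), ∀ x ∈ K, g⁻¹ * x * g ∈ S := by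
  classical
  -- Step 1: K contains a non-scalar element
  have hexists : ∃ k : Matrix.GeneralLinearGroup (Fin 2) (ZMod p), k ∈ K ∧
      ¬ ∃ c : ZMod p, (k : Matrix (Fin 2) (Fin 2) (ZMod p)) = c • 1 := by
    by_contra hcon
    push_neg at hcon
    have hW := hirr (Submodule.span (ZMod p) {(Pi.single (0 : Fin 2) (1 : ZMod p) : Fin 2 → ZMod p)}) ?_
    · rcases hW with hW | hW
      · have hmem : (Pi.single (0 : Fin 2) (1 : ZMod p) : Fin 2 → ZMod p) ∈
            Submodule.span (ZMod p)
              {(Pi.single (0 : Fin 2) (1 : ZMod p) : Fin 2 → ZMod p)} :=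
          Submodule.mem_span_singleton_self _
        rw [hW] at hmem
        have h0 := (Submodule.mem_bot (ZMod p)).mp hmem
        have := congrFun h0 0
        simp at this
      · have hmem : (Pi.single (1 : Fin 2) (1 : ZMod p) : Fin 2 → ZMod p) ∈
            Submodule.span (ZMod p)
              {(Pi.single (0 : Fin 2) (1 : ZMod p) : Fin 2 → ZMod p)} := by
          rw [hW]; trivial
        obtain ⟨a, ha⟩ := Submodule.mem_span_singleton.mp hmem
        have := congrFun ha 1
        simp at this
    · intro g hg v hv
      obtain ⟨c, hc⟩ := hcon g hg
      rw [hc, Matrix.smul_mulVec, Matrix.one_mulVec]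
      exact Submodule.smul_mem _ c hv
  obtain ⟨k, hkK, hksc⟩ := hexists
  -- Step 2: k has no eigenvalue in ZMod p
  have heig : ∀ lam : ZMod p,
      ((k : Matrix (Fin 2) (Fin 2) (ZMod p)) - lam • 1).det ≠ 0 := by
    intro lam hdet
    obtain ⟨v, hv0, hveq⟩ := (Matrix.exists_mulVec_eq_zero_iff).mpr hdet
    set A : Matrix (Fin 2) (Fin 2) (ZMod p) :=
      (k : Matrix (Fin 2) (Fin 2) (ZMod p)) - lam • 1 with hA
    have hW := hirr (LinearMap.ker A.mulVecLin) ?_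
    · rcases hW with hW | hW
      · have : v ∈ LinearMap.ker A.mulVecLin := by
          rw [LinearMap.mem_ker, Matrix.mulVecLin_apply]; exact hveq
        rw [hW, Submodule.mem_bot] at this
        exact hv0 this
      · apply hksc
        refine ⟨lam, ?_⟩
        have hzero : A = 0 := by
          ext i j
          have hmem : (Pi.single j (1 : ZMod p)) ∈ LinearMap.ker A.mulVecLin := by
            rw [hW]; trivial
          rw [LinearMap.mem_ker, Matrix.mulVecLin_apply] at hmem
          have := congrFun hmem i
          simpa using this
        have := sub_eq_zero.mp (hA ▸ hzero)
        exact this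
    · intro g hg w hw
      rw [LinearMap.mem_ker, Matrix.mulVecLin_apply] at hw ⊢
      have hcomm : A * (g : Matrix (Fin 2) (Fin 2) (ZMod p))
          = (g : Matrix (Fin 2) (Fin 2) (ZMod p)) * A := by
        have h1 : k * g = g * k := hab k hkK g hg
        have h2 : (k : Matrix (Fin 2) (Fin 2) (ZMod p)) * g = g * k :=
          congrArg Units.val h1
        rw [hA, sub_mul, mul_sub, h2, Matrix.smul_mul, Matrix.mul_smul,
          one_mul, mul_one]
      rw [Matrix.mulVec_mulVec, hcomm, ← Matrix.mulVec_mulVec, hw,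
        Matrix.mulVec_zero]
  set kM : Matrix (Fin 2) (Fin 2) (ZMod p) := (k : Matrix (Fin 2) (Fin 2) (ZMod p))
    with hkMdef
  set R : Subring (Matrix (Fin 2) (Fin 2) (ZMod p)) := spanRing kM with hRdef
  set S : Subgroup (Matrix.GeneralLinearGroup (Fin 2) (ZMod p)) := singerSubgroup kM
    with hSdef
  -- nonzero elements of R have nonzero determinant
  have hdetR : ∀ x y : ZMod p, (x • 1 + y • kM : Matrix (Fin 2) (Fin 2) (ZMod p)) ≠ 0 →
      (x • 1 + y • kM : Matrix (Fin 2) (Fin 2) (ZMod p)).det ≠ 0 := by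
    intro x y hne
    by_cases hy : y = 0
    · subst hy
      have hx : x ≠ 0 := by rintro rfl; simp at hne
      simp only [zero_smul, add_zero]
      rw [Matrix.det_smul, Matrix.det_one]
      simpa using pow_ne_zero 2 hx
    · have hxy : y * -(x / y) = -x := by field_simp
      have hrw : x • (1 : Matrix (Fin 2) (Fin 2) (ZMod p)) + y • kM
          = y • (kM - (-(x / y)) • 1) := by
        rw [smul_sub, smul_smul, hxy, neg_smul, sub_neg_eq_add, add_comm]
      rw [hrw, Matrix.det_smul]
      exact mul_ne_zero (pow_ne_zero _ hy) (heig _)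
  -- nonzero elements of R are invertible matrices
  have hunit : ∀ m ∈ R, m ≠ 0 → IsUnit m := by
    intro m hm hne
    obtain ⟨x, y, rfl⟩ := hm
    rw [Matrix.isUnit_iff_isUnit_det]
    exact (hdetR x y hne).isUnit
  -- K is contained in S
  have hKS : ∀ x ∈ K, x ∈ S := by
    intro x hx
    rw [hSdef, mem_singerSubgroup]
    have h1 : x * k = k * x := hab x hx k hkK
    have h2 : (x : Matrix (Fin 2) (Fin 2) (ZMod p)) * kM
        = kM * (x : Matrix (Fin 2) (Fin 2) (ZMod p)) := congrArg Units.val h1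
    exact commutant kM (x : Matrix (Fin 2) (Fin 2) (ZMod p)) hksc h2
  -- R is a finite integral domain
  letI : CommRing ↥R := spanRingCommRing kM
  haveI : Nontrivial ↥R := nontrivial_of_ne 0 1 (by
    intro h
    have := congrArg (Subtype.val : ↥R → Matrix (Fin 2) (Fin 2) (ZMod p)) h
    simp at this)
  haveI : NoZeroDivisors ↥R := by
    constructor
    intro a b hab0
    by_cases ha : a = 0
    · exact Or.inl ha
    · right
      have haval : (a : Matrix (Fin 2) (Fin 2) (ZMod p)) ≠ 0 := by
        intro h; exact ha (Subtype.ext h)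
      obtain ⟨u, hu⟩ := hunit a a.2 haval
      have hval : (a : Matrix (Fin 2) (Fin 2) (ZMod p))
          * (b : Matrix (Fin 2) (Fin 2) (ZMod p)) = 0 := by
        have := congrArg (Subtype.val : ↥R → Matrix (Fin 2) (Fin 2) (ZMod p)) hab0
        exact this
      apply Subtype.ext
      have h2 : ((u⁻¹ : (Matrix (Fin 2) (Fin 2) (ZMod p))ˣ) :
          Matrix (Fin 2) (Fin 2) (ZMod p)) * ((u : Matrix (Fin 2) (Fin 2) (ZMod p))
            * (b : Matrix (Fin 2) (Fin 2) (ZMod p))) = 0 := by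
        rw [hu, hval, mul_zero]
      rwa [← mul_assoc, Units.inv_mul, one_mul] at h2
  haveI : IsDomain ↥R := @NoZeroDivisors.to_isDomain ↥R CommRing.toRing _ this
  -- cyclicity of S and K
  let f : ↥S →* ↥R :=
    { toFun := fun g => ⟨((g : Matrix.GeneralLinearGroup (Fin 2) (ZMod p)) :
        Matrix (Fin 2) (Fin 2) (ZMod p)), g.2⟩
      map_one' := rfl
      map_mul' := fun a b => rfl }
  have hfinj : Function.Injective f := by
    intro a b hfab
    have := congrArg (Subtype.val : ↥R → Matrix (Fin 2) (Fin 2) (ZMod p)) hfab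
    exact Subtype.ext (Units.ext this)
  have cycS : IsCyclic ↥S := isCyclic_of_subgroup_isDomain f hfinj
  let fK : ↥K →* ↥R :=
    { toFun := fun g => ⟨((g : Matrix.GeneralLinearGroup (Fin 2) (ZMod p)) :
        Matrix (Fin 2) (Fin 2) (ZMod p)), hKS g g.2⟩
      map_one' := rfl
      map_mul' := fun a b => rfl }
  have hfKinj : Function.Injective fK := by
    intro a b hfab
    have := congrArg (Subtype.val : ↥R → Matrix (Fin 2) (Fin 2) (ZMod p)) hfab
    exact Subtype.ext (Units.ext this)
  have cycK : IsCyclic ↥K := isCyclic_of_subgroup_isDomain fK hfKinj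
  -- cardinality of R
  have hcardR : Nat.card ↥R = p ^ 2 := by
    have e2 : (ZMod p × ZMod p) ≃ ↥R := by
      refine Equiv.ofBijective
        (fun xy => ⟨xy.1 • 1 + xy.2 • kM, ⟨xy.1, xy.2, rfl⟩⟩) ⟨?_, ?_⟩
      · rintro ⟨x, y⟩ ⟨x', y'⟩ hxy
        have hval : x • (1 : Matrix (Fin 2) (Fin 2) (ZMod p)) + y • kM
            = x' • 1 + y' • kM := congrArg Subtype.val hxy
        have hyy : y = y' := by
          by_contra hyy
          apply hksc
          refine ⟨(y - y')⁻¹ * (x' - x), ?_⟩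
          have h1 : (y - y') • kM - (x' - x) • (1 : Matrix (Fin 2) (Fin 2) (ZMod p))
              = 0 := by
            calc (y - y') • kM - (x' - x) • (1 : Matrix (Fin 2) (Fin 2) (ZMod p))
                = (x • 1 + y • kM) - (x' • 1 + y' • kM) := by module
              _ = 0 := sub_eq_zero.mpr hval
          have h1' : (y - y') • kM = (x' - x) • (1 : Matrix (Fin 2) (Fin 2) (ZMod p)) :=
            sub_eq_zero.mp h1
          have h2 := congrArg (fun z : Matrix (Fin 2) (Fin 2) (ZMod p)
            => (y - y')⁻¹ • z) h1'
          simpa [smul_smul, inv_mul_cancel₀ (sub_ne_zero_of_ne hyy)] using h2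
        subst hyy
        have hx : x = x' := by
          have h1 : x • (1 : Matrix (Fin 2) (Fin 2) (ZMod p)) = x' • 1 := by
            have h3 := hval
            rwa [add_left_inj] at h3
          have := congrFun (congrFun h1 0) 0
          simpa using this
        rw [hx]
      · rintro ⟨m, x, y, rfl⟩
        exact ⟨(x, y), rfl⟩
    rw [← Nat.card_congr e2, Nat.card_prod, Nat.card_zmod, ← pow_two]
  -- cardinality of S
  have hvalne : ∀ g : ↥S, ((g : Matrix.GeneralLinearGroup (Fin 2) (ZMod p)) :
      Matrix (Fin 2) (Fin 2) (ZMod p)) ≠ 0 := by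
    intro g h0
    have h1 := Units.inv_mul (g : Matrix.GeneralLinearGroup (Fin 2) (ZMod p))
    rw [h0, mul_zero] at h1
    exact one_ne_zero h1.symm
  have e1 : ↥S ≃ {r : ↥R // r ≠ 0} := by
    refine Equiv.ofBijective (fun g =>
      ⟨⟨((g : Matrix.GeneralLinearGroup (Fin 2) (ZMod p)) :
          Matrix (Fin 2) (Fin 2) (ZMod p)), g.2⟩,
        fun h => hvalne g (congrArg (Subtype.val : ↥R → Matrix (Fin 2) (Fin 2) (ZMod p)) h)⟩)
      ⟨?_, ?_⟩
    · intro a b hfab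
      have h1 := congrArg (Subtype.val : {r : ↥R // r ≠ 0} → ↥R) hfab
      have h2 := congrArg (Subtype.val : ↥R → Matrix (Fin 2) (Fin 2) (ZMod p)) h1
      exact Subtype.ext (Units.ext h2)
    · rintro ⟨⟨m, hm⟩, hne⟩
      have hm0 : m ≠ 0 := fun h => hne (Subtype.ext h)
      obtain ⟨u, hu⟩ := hunit m hm hm0
      refine ⟨⟨u, ?_⟩, ?_⟩
      · show (u : Matrix (Fin 2) (Fin 2) (ZMod p)) ∈ spanRing kM
        rw [hu]; exact hm
      · apply Subtype.ext; apply Subtype.ext; exact hu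
  have hcardS : Nat.card ↥S = p ^ 2 - 1 := by
    haveI : Fintype ↥R := Fintype.ofFinite ↥R
    rw [Nat.card_congr e1, Nat.card_eq_fintype_card, Fintype.card_subtype_compl,
      Fintype.card_subtype_eq, ← Nat.card_eq_fintype_card, hcardR]
  refine ⟨cycK, S, cycS, hcardS, 1, ?_⟩
  intro x hx
  simpa using hKS x hx
end

section
/- Let G be a finite group of cube-free order with Frattini subgroup Φ(G), and let p be a prime dividing |Φ(G)|. Then the Sylow p-subgroup of G is cyclic of order p^2. -/
open Subgroup

section SylowFrattiniAux
variable {G : Type*} [Group G]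

lemma centralizer_normal' (N : Subgroup G) [hN : N.Normal] :
    (Subgroup.centralizer (N : Set G)).Normal := by
  constructor
  intro c hc g
  rw [Subgroup.mem_centralizer_iff] at hc ⊢
  intro h hh
  have h1 : g⁻¹ * h * g ∈ N := by simpa using hN.conj_mem h hh g⁻¹
  have h2 := hc _ h1
  calc h * (g*c*g⁻¹) = g * ((g⁻¹*h*g) * c) * g⁻¹ := by group
  _ = g * (c * (g⁻¹*h*g)) * g⁻¹ := by rw [h2]
  _ = (g*c*g⁻¹) * h := by group

def conjHom (N C : Subgroup G) [N.Normal] [C.Normal]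
    (π : ↥C →* ↥N) (g : G) : ↥C →* ↥N :=
  ((MulAut.conjNormal g).toMonoidHom.comp π).comp (MulAut.conjNormal g⁻¹).toMonoidHom

lemma conjHom_coe (N C : Subgroup G) [N.Normal] [C.Normal]
    (π : ↥C →* ↥N) (g : G) (c : ↥C) :
    ((conjHom N C π g c : ↥N) : G)
      = g * ((π ((MulAut.conjNormal g⁻¹) c) : ↥N) : G) * g⁻¹ := by
  simp [conjHom]

lemma exists_proper_supplement [Finite G]
    {p : ℕ} [hpf : Fact p.Prime] (N C : Subgroup G) [hNn : N.Normal] [hCn : C.Normal]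
    (hNcard : Nat.card N = p)
    (hpCi : ¬ p ∣ C.index)
    (hNC : N ≤ C)
    (hcent : ∀ (c₀ : ↥C) (n : G), n ∈ N → (c₀ : G) * n * (c₀ : G)⁻¹ = n)
    (π : ↥C →* ↥N)
    (hπ : ∀ c : ↥C, (c : G) ∈ N → ((π c : ↥N) : G) = (c : G)) :
    ∃ D : Subgroup G, D ≠ ⊤ ∧ N ⊔ D = ⊤ := by
  have hp := hpf.out
  letI : CommGroup ↥N := @IsCyclic.commGroup _ _ (isCyclic_of_prime_card hNcard)
  letI : Fintype (G ⧸ C) := Fintype.ofFinite _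
  have hπconj : ∀ (c₀ y : ↥C), π (c₀⁻¹ * y * c₀) = π y := by
    intro c₀ y
    rw [map_mul, map_mul, map_inv, mul_comm ((π c₀)⁻¹) (π y), mul_assoc, inv_mul_cancel, mul_one]
  have hconst : ∀ (g : G) (c₀ : ↥C), conjHom N C π (g * (c₀ : G)) = conjHom N C π g := by
    intro g c₀
    ext c
    rw [conjHom_coe, conjHom_coe]
    have harg : (MulAut.conjNormal (g * (c₀ : G))⁻¹) c
        = c₀⁻¹ * ((MulAut.conjNormal g⁻¹) c) * c₀ := by
      apply Subtype.ext
      push_cast [MulAut.conjNormal_apply]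
      group
    rw [harg, hπconj]
    have h3 := hcent c₀ ((π ((MulAut.conjNormal g⁻¹) c) : ↥N) : G)
      (π ((MulAut.conjNormal g⁻¹) c)).2
    calc (g * (c₀ : G)) * ((π ((MulAut.conjNormal g⁻¹) c) : ↥N) : G) * (g * (c₀ : G))⁻¹
        = g * ((c₀ : G) * ((π ((MulAut.conjNormal g⁻¹) c) : ↥N) : G) * (c₀ : G)⁻¹) * g⁻¹ := by
          group
      _ = g * ((π ((MulAut.conjNormal g⁻¹) c) : ↥N) : G) * g⁻¹ := by rw [h3]
  -- descend to the quotient G ⧸ C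
  set F : G ⧸ C → (↥C →* ↥N) := fun q => Quotient.liftOn' q (conjHom N C π) (by
    intro a b hab
    rw [QuotientGroup.leftRel_apply] at hab
    have hb : b = a * ((⟨a⁻¹ * b, hab⟩ : ↥C) : G) := by simp
    rw [hb, hconst]) with hF_def
  have hFmk : ∀ g : G, F (QuotientGroup.mk g) = conjHom N C π g := fun g => rfl
  set πStar : ↥C →* ↥N := ∏ q : G ⧸ C, F q with hπStar_def
  set d := Fintype.card (G ⧸ C) with hd_def
  -- value of πStar on N
  have h1 : ∀ (c : ↥C) (hc : (c : G) ∈ N), πStar c = (⟨(c : G), hc⟩ : ↥N) ^ d := by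
    intro c hc
    rw [hπStar_def, MonoidHom.finset_prod_apply]
    have hq : ∀ q : G ⧸ C, F q c = (⟨(c : G), hc⟩ : ↥N) := by
      intro q
      induction q using Quotient.inductionOn' with
      | h g =>
        have e1 : (Quotient.mk'' g : G ⧸ C) = QuotientGroup.mk g := rfl
        rw [e1, hFmk]
        apply Subtype.ext
        rw [conjHom_coe]
        have hmem : (((MulAut.conjNormal g⁻¹) c : ↥C) : G) ∈ N := by
          rw [MulAut.conjNormal_apply]
          exact hNn.conj_mem _ hc g⁻¹
        have hmk : ((⟨(c : G), hc⟩ : ↥N) : G) = (c : G) := rfl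
        rw [hπ _ hmem, MulAut.conjNormal_apply, hmk]
        group
    rw [Finset.prod_congr rfl (fun q _ => hq q), Finset.prod_const, Finset.card_univ]
  -- equivariance of πStar
  have h2 : ∀ (g₀ : G) (c : ↥C),
      πStar ((MulAut.conjNormal g₀) c) = (MulAut.conjNormal g₀) (πStar c) := by
    intro g₀ c
    rw [hπStar_def, MonoidHom.finset_prod_apply, MonoidHom.finset_prod_apply]
    rw [map_prod]
    have hq : ∀ q : G ⧸ C,
        F q ((MulAut.conjNormal g₀) c)
          = (MulAut.conjNormal g₀) (F ((g₀⁻¹ : G) • q) c) := by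
      intro q
      induction q using Quotient.inductionOn' with
      | h g =>
        have e1 : (Quotient.mk'' g : G ⧸ C) = QuotientGroup.mk g := rfl
        have e2 : (g₀⁻¹ : G) • (QuotientGroup.mk g : G ⧸ C) = QuotientGroup.mk (g₀⁻¹ * g) := rfl
        rw [e1, e2, hFmk, hFmk]
        apply Subtype.ext
        rw [MulAut.conjNormal_apply]
        rw [conjHom_coe, conjHom_coe]
        have harg : (MulAut.conjNormal g⁻¹) ((MulAut.conjNormal g₀) c)
            = (MulAut.conjNormal (g₀⁻¹ * g)⁻¹) c := by
          apply Subtype.ext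
          push_cast [MulAut.conjNormal_apply]
          group
        rw [harg]
        group
    rw [Finset.prod_congr rfl (fun q _ => hq q)]
    exact Equiv.prod_comp (MulAction.toPerm (g₀⁻¹ : G)) (fun q => (MulAut.conjNormal g₀) (F q c))
  -- arithmetic: choose e with d * e ≡ 1 mod p
  have hdC : d = C.index := by rw [hd_def, Subgroup.index_eq_card, Nat.card_eq_fintype_card]
  have hpd : ¬ p ∣ d := hdC ▸ hpCi
  obtain ⟨e, -, he⟩ := Nat.exists_mul_mod_eq_one_of_coprime
    ((Nat.Prime.coprime_iff_not_dvd hp).mpr hpd).symm hp.one_lt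
  set π' : ↥C →* ↥N := πStar ^ e with hπ'_def
  have hπ'apply : ∀ c : ↥C, π' c = (πStar c) ^ e := fun c => rfl
  have h1' : ∀ (c : ↥C) (hc : (c : G) ∈ N), π' c = (⟨(c : G), hc⟩ : ↥N) := by
    intro c hc
    rw [hπ'apply, h1 c hc, ← pow_mul]
    set n : ↥N := ⟨(c : G), hc⟩
    have hord : n ^ p = 1 := by
      rw [← hNcard]
      exact pow_card_eq_one'
    conv_lhs => rw [← Nat.div_add_mod (d * e) p]
    rw [pow_add, pow_mul, hord, one_pow, one_mul, he, pow_one]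
  have h2' : ∀ (g₀ : G) (c : ↥C),
      ((π' ((MulAut.conjNormal g₀) c) : ↥N) : G) = g₀ * ((π' c : ↥N) : G) * g₀⁻¹ := by
    intro g₀ c
    rw [hπ'apply, hπ'apply, h2, ← map_pow, MulAut.conjNormal_apply]
  -- the kernel of π', pushed into G
  set H := Subgroup.map C.subtype π'.ker with hH_def
  have hHC : H ≤ C := map_subtype_le _
  haveI hHnorm : H.Normal := by
    constructor
    intro h hh g
    rw [Subgroup.mem_map] at hh ⊢
    obtain ⟨c, hc, rfl⟩ := hh
    refine ⟨(MulAut.conjNormal g) c, ?_, ?_⟩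
    · rw [MonoidHom.mem_ker] at hc ⊢
      apply Subtype.ext
      have h3 := h2' g c
      rw [hc] at h3
      rw [h3]
      simp
    · simp [MulAut.conjNormal_apply]
  have hNH : N ⊓ H = ⊥ := by
    rw [eq_bot_iff]
    intro y hy
    rw [Subgroup.mem_inf] at hy
    obtain ⟨hyN, hyH⟩ := hy
    rw [Subgroup.mem_map] at hyH
    obtain ⟨c, hc, rfl⟩ := hyH
    rw [MonoidHom.mem_ker] at hc
    have h3 := h1' c hyN
    rw [hc] at h3
    rw [Subgroup.mem_bot]
    have h4 := congrArg (fun z : ↥N => (z : G)) h3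
    simpa using h4.symm
  have hNHsup : N ⊔ H = C := by
    apply le_antisymm (sup_le hNC hHC)
    intro c' hc'
    set cc : ↥C := ⟨c', hc'⟩ with hcc_def
    set n : ↥N := π' cc with hn_def
    have hnC : (n : G) ∈ C := hNC n.2
    have hker : (⟨(n : G), hnC⟩ : ↥C)⁻¹ * cc ∈ π'.ker := by
      rw [MonoidHom.mem_ker, map_mul, map_inv]
      have h5 : π' (⟨(n : G), hnC⟩ : ↥C) = n := by
        rw [h1' _ n.2]
      rw [h5, hn_def, inv_mul_cancel]
    have hsplit : c' = (n : G) * (((⟨(n : G), hnC⟩ : ↥C)⁻¹ * cc : ↥C) : G) := by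
      push_cast
      rw [← mul_assoc, mul_inv_cancel, one_mul]
    rw [hsplit]
    exact Subgroup.mul_mem_sup n.2 (Subgroup.mem_map.mpr ⟨_, hker, rfl⟩)
  -- pass to the quotient by H and use Schur–Zassenhaus
  set ρ := QuotientGroup.mk' H with hρ_def
  have hρsurj : Function.Surjective ρ := QuotientGroup.mk'_surjective H
  set Cb := Subgroup.map ρ C with hCb_def
  haveI hCbnorm : Cb.Normal := hCn.map ρ hρsurj
  have hmapN : Subgroup.map ρ N = Cb := by
    apply le_antisymm (Subgroup.map_mono hNC)
    rw [← hNHsup, Subgroup.map_sup]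
    have hbot : Subgroup.map ρ H = ⊥ := by
      rw [Subgroup.map_eq_bot_iff, hρ_def, QuotientGroup.ker_mk']
    rw [hbot, sup_bot_eq]
  have hCbcard : Nat.card Cb = p := by
    set ψ2 : ↥N →* G ⧸ H := ρ.comp N.subtype with hψ2_def
    have hinj : Function.Injective ψ2 := by
      refine (injective_iff_map_eq_one ψ2).mpr ?_
      intro n hn
      have h6 : (n : G) ∈ H := by
        rw [← QuotientGroup.ker_mk' H, MonoidHom.mem_ker]
        exact hn
      have h7 : (n : G) ∈ N ⊓ H := Subgroup.mem_inf.mpr ⟨n.2, h6⟩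
      rw [hNH, Subgroup.mem_bot] at h7
      exact Subtype.ext h7
    have hrange : ψ2.range = Cb := by
      rw [hψ2_def, MonoidHom.range_comp, Subgroup.range_subtype, hmapN]
    rw [← hrange, ← hNcard]
    symm
    exact Nat.card_congr (MonoidHom.ofInjective hinj).toEquiv
  have hCbne : Cb ≠ ⊥ := by
    intro hb
    rw [hb, Subgroup.card_bot] at hCbcard
    exact hp.ne_one hCbcard.symm
  have hCbindex : Cb.index = C.index := by
    rw [hCb_def, Subgroup.index_map, hρ_def, QuotientGroup.ker_mk',
      sup_eq_left.mpr hHC, MonoidHom.range_eq_top.mpr hρsurj, Subgroup.index_top, mul_one]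
  have hcop : (Nat.card Cb).Coprime Cb.index := by
    rw [hCbcard, hCbindex]
    exact (Nat.Prime.coprime_iff_not_dvd hp).mpr hpCi
  obtain ⟨Db, hDb⟩ := Subgroup.exists_right_complement'_of_coprime hcop
  set D := Subgroup.comap ρ Db with hD_def
  have hDne : D ≠ ⊤ := by
    intro htop
    have hDbtop : Db = ⊤ := by
      rw [← Subgroup.map_comap_eq_self_of_surjective hρsurj Db, ← hD_def, htop,
        Subgroup.map_top_of_surjective ρ hρsurj]
    have h8 := hDb.disjoint
    rw [hDbtop, disjoint_top] at h8
    exact hCbne h8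
  refine ⟨D, hDne, ?_⟩
  have hker : ρ.ker ≤ D := by
    rw [hD_def, ← MonoidHom.comap_bot ρ]
    exact Subgroup.comap_mono bot_le
  have hmap : Subgroup.map ρ (N ⊔ D) = ⊤ := by
    rw [Subgroup.map_sup, hmapN, hD_def, Subgroup.map_comap_eq_self_of_surjective hρsurj,
      hDb.sup_eq_top]
  have h9 := Subgroup.comap_map_eq ρ (N ⊔ D)
  rw [hmap, Subgroup.comap_top] at h9
  rw [hρ_def, QuotientGroup.ker_mk'] at h9
  have hHle : H ≤ N ⊔ D := le_trans (by rw [hρ_def, QuotientGroup.ker_mk'] at hker; exact hker)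
    le_sup_right
  rw [sup_eq_left.mpr hHle] at h9
  exact h9.symm


section FiniteAux
variable [Finite G]

lemma sylow_card_aux (hcf : ∀ r : ℕ, r.Prime → ¬ r ^ 3 ∣ Nat.card G)
    {p : ℕ} [hpf : Fact p.Prime] (hdvd : p ∣ Nat.card (frattini G)) (P : Sylow p G) :
    Nat.card (P : Subgroup G) = p ^ 2 ∧
    ∃ N : Subgroup G, N.Normal ∧ N ≤ frattini G ∧ N ≤ (P : Subgroup G) ∧ Nat.card N = p := by
  have hp := hpf.out
  have hpG : p ∣ Nat.card G := hdvd.trans (Subgroup.card_subgroup_dvd_card _)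
  -- no Sylow p-subgroup of G is contained in the Frattini subgroup
  have key : ∀ P' : Sylow p G, (P' : Subgroup G) ≤ frattini G → False := by
    intro P' hPF
    have hnorm : (P' : Subgroup G).Normal := by
      have h1 := Sylow.normalizer_sup_eq_top' P' hPF
      exact normalizer_eq_top_iff.mp (frattini_nongenerating h1)
    obtain ⟨H, hH⟩ := Subgroup.exists_right_complement'_of_coprime
      (N := (P' : Subgroup G)) P'.card_coprime_index
    have hsup : (P' : Subgroup G) ⊔ H = ⊤ := hH.sup_eq_top
    have hHtop : H = ⊤ := by
      apply frattini_nongenerating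
      rw [eq_top_iff, ← hsup, sup_comm ((P' : Subgroup G))]
      exact sup_le_sup_left hPF H
    have hbot : (P' : Subgroup G) = ⊥ := by
      have := hH.disjoint
      rwa [hHtop, disjoint_top] at this
    have hcard : p ∣ Nat.card (P' : Subgroup G) := P'.dvd_card_of_dvd_card hpG
    rw [hbot, Subgroup.card_bot] at hcard
    exact absurd (Nat.dvd_one.mp hcard) hp.ne_one
  -- the normal Sylow subgroup of the Frattini subgroup, mapped into G
  obtain ⟨Q⟩ : Nonempty (Sylow p ↥(frattini G)) := inferInstance
  set Nm : Subgroup G := map (frattini G).subtype (Q : Subgroup ↥(frattini G)) with hNm_def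
  have hNmF : Nm ≤ frattini G := map_subtype_le _
  have hNmnorm : Nm.Normal := by
    have h1 := Sylow.normalizer_sup_eq_top Q
    exact normalizer_eq_top_iff.mp (frattini_nongenerating h1)
  have hNmp : IsPGroup p Nm := Q.isPGroup'.map _
  have hNmcard : p ∣ Nat.card Nm := by
    have h1 : p ∣ Nat.card (Q : Subgroup ↥(frattini G)) := Q.dvd_card_of_dvd_card hdvd
    have h2 : Nat.card (Q : Subgroup ↥(frattini G)) = Nat.card Nm :=
      Nat.card_congr (Subgroup.equivMapOfInjective _ _ (subtype_injective _)).toEquiv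
    exact h2 ▸ h1
  have hNmle : Nm ≤ (P : Subgroup G) := by
    have h1 : Nm ⊔ (P : Subgroup G) = (P : Subgroup G) :=
      P.3 (IsPGroup.to_sup_of_normal_left hNmp P.isPGroup') le_sup_right
    exact sup_eq_right.mp h1
  have hcardP : Nat.card (P : Subgroup G) = p ^ 2 := by
    set n := (Nat.card G).factorization p with hn
    have hPn : Nat.card (P : Subgroup G) = p ^ n := P.card_eq_multiplicity
    have hpdvd : p ∣ Nat.card (P : Subgroup G) := P.dvd_card_of_dvd_card hpG
    have hn0 : n ≠ 0 := by
      rintro h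
      rw [hPn, h, pow_zero] at hpdvd
      exact absurd (Nat.dvd_one.mp hpdvd) hp.ne_one
    have hn3 : n < 3 := by
      by_contra h
      push_neg at h
      exact hcf p hp ((pow_dvd_pow p h).trans (hPn ▸ Subgroup.card_subgroup_dvd_card _))
    have hn1 : n ≠ 1 := by
      rintro h
      apply key P
      have hle : (P : Subgroup G) ≤ Nm := by
        apply le_of_eq
        symm
        apply Subgroup.eq_of_le_of_card_ge hNmle
        rw [hPn, h, pow_one]
        exact Nat.le_of_dvd Nat.card_pos hNmcard
      exact hle.trans hNmF
    have : n = 2 := by omega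
    rw [hPn, this]
  refine ⟨hcardP, Nm, hNmnorm, hNmF, hNmle, ?_⟩
  have hdvd2 : Nat.card Nm ∣ p ^ 2 := hcardP ▸ Subgroup.card_dvd_of_le hNmle
  obtain ⟨m, hm2, hmeq⟩ := (Nat.dvd_prime_pow hp).mp hdvd2
  have hm0 : m ≠ 0 := by
    rintro h
    rw [hmeq, h, pow_zero] at hNmcard
    exact absurd (Nat.dvd_one.mp hNmcard) hp.ne_one
  have hm1 : m ≠ 2 := by
    rintro h
    apply key P
    have hle : (P : Subgroup G) ≤ Nm := by
      apply le_of_eq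
      symm
      apply Subgroup.eq_of_le_of_card_ge hNmle
      rw [hcardP, hmeq, h]
    exact hle.trans hNmF
  have : m = 1 := by omega
  rw [hmeq, this, pow_one]


lemma exists_pi (hcf : ∀ r : ℕ, r.Prime → ¬ r ^ 3 ∣ Nat.card G)
    {p : ℕ} [hpf : Fact p.Prime] (N : Subgroup G) [hNn : N.Normal]
    (hNcard : Nat.card N = p) (P : Sylow p G)
    (hP2 : Nat.card (P : Subgroup G) = p ^ 2) (hNP : N ≤ (P : Subgroup G))
    (hnc : ¬ IsCyclic (P : Subgroup G)) :
    ¬ p ∣ (Subgroup.centralizer (N : Set G)).index ∧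
    ∃ π : ↥(Subgroup.centralizer (N : Set G)) →* ↥N,
      ∀ c : ↥(Subgroup.centralizer (N : Set G)), (c : G) ∈ N → ((π c : ↥N) : G) = (c : G) := by
  have hp := hpf.out
  set C := Subgroup.centralizer (N : Set G) with hC_def
  -- P is abelian
  have hcomm : ∀ a b : ↥(P : Subgroup G), a * b = b * a :=
    IsPGroup.commutative_of_card_eq_prime_sq hP2
  -- P ≤ C
  have hPC : (P : Subgroup G) ≤ C := by
    intro c hc
    rw [hC_def, Subgroup.mem_centralizer_iff]
    intro n hn
    exact congrArg Subtype.val (hcomm ⟨n, hNP hn⟩ ⟨c, hc⟩)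
  have hNC : N ≤ C := hNP.trans hPC
  -- p² divides card C, so p does not divide the index of C
  have hCcard : (p:ℕ) ^ 2 ∣ Nat.card ↥C := by
    rw [← hP2]
    exact Subgroup.card_dvd_of_le hPC
  have hpCi : ¬ p ∣ C.index := by
    intro hpc
    apply hcf p hp
    have h1 : p ^ 2 * p ∣ Nat.card ↥C * C.index := mul_dvd_mul hCcard hpc
    rw [Subgroup.card_mul_index] at h1
    rwa [pow_succ] at h1  -- p^3 = p^2 * p
  refine ⟨hpCi, ?_⟩
  -- exponent of P is p
  have hexp : Monoid.exponent ↥(P : Subgroup G) = p :=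
    (not_isCyclic_iff_exponent_eq_prime hp hP2).mp hnc
  -- pick x ∈ P \ N of order p
  have hnotle : ¬ (P : Subgroup G) ≤ N := by
    intro hle
    have heq : (P : Subgroup G) = N :=
      Subgroup.eq_of_le_of_card_ge hle
        (by rw [hNcard, hP2]; exact Nat.le_self_pow two_ne_zero p)
    rw [heq, hNcard] at hP2
    have h2 : p * 1 = p * p := by rw [mul_one, ← pow_two]; exact hP2
    have h3 := Nat.eq_of_mul_eq_mul_left hp.pos h2
    have h4 := hp.two_le
    omega
  obtain ⟨x, hxP, hxN⟩ := SetLike.not_le_iff_exists.mp hnotle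
  have hx1 : x ≠ 1 := fun h => hxN (h ▸ N.one_mem)
  have hxp : x ^ p = 1 := by
    have := Monoid.pow_exponent_eq_one (⟨x, hxP⟩ : ↥(P : Subgroup G))
    rw [hexp] at this
    exact congrArg Subtype.val this
  have hxord : orderOf x = p := by
    have h1 : orderOf x ∣ p := orderOf_dvd_of_pow_eq_one hxp
    rcases (Nat.dvd_prime hp).mp h1 with h | h
    · exact absurd (orderOf_eq_one_iff.mp h) hx1
    · exact h
  -- K := ⟨x⟩
  set K : Subgroup G := Subgroup.zpowers x with hK_def
  have hKP : K ≤ (P : Subgroup G) := Subgroup.zpowers_le.mpr hxP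
  have hKcard : Nat.card K = p := by rw [hK_def, Nat.card_zpowers, hxord]
  -- K as subgroup of P is normal (P abelian)
  haveI hKnorm : (K.subgroupOf (P : Subgroup G)).Normal := by
    constructor
    intro n hn g
    have : g * n * g⁻¹ = n := by rw [hcomm g n]; group
    rwa [this]
  -- the quotient A = P / K
  set A := ↥(P : Subgroup G) ⧸ K.subgroupOf (P : Subgroup G) with hA_def
  have hAcard : Nat.card A = p := by
    have h1 : Nat.card (K.subgroupOf (P : Subgroup G)) = p :=
      (Nat.card_congr (Subgroup.subgroupOfEquivOfLe hKP).toEquiv).trans hKcard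
    have h2 := Subgroup.card_mul_index (K.subgroupOf (P : Subgroup G))
    rw [h1, hP2] at h2
    have h3 : (K.subgroupOf (P : Subgroup G)).index = Nat.card A := rfl
    rw [h3] at h2
    have h4 : p * Nat.card A = p * p := by rw [h2, pow_two]
    exact Nat.eq_of_mul_eq_mul_left hp.pos h4
  haveI : IsCyclic A := isCyclic_of_prime_card hAcard
  letI : CommGroup A := IsCyclic.commGroup
  -- the transfer map
  set Pc : Subgroup ↥C := (P : Subgroup G).subgroupOf C with hPc_def
  haveI : Pc.FiniteIndex := ⟨Subgroup.index_ne_zero_of_finite⟩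
  set eqv : ↥Pc ≃* ↥(P : Subgroup G) := Subgroup.subgroupOfEquivOfLe hPC with heqv_def
  set φ : ↥Pc →* A := (QuotientGroup.mk' (K.subgroupOf (P : Subgroup G))).comp eqv.toMonoidHom
    with hφ_def
  set V : ↥C →* A := φ.transfer with hV_def
  -- p ∤ m := index of Pc in C
  set m := Pc.index with hm_def
  have hpm : ¬ p ∣ m := by
    intro hpm
    apply hcf p hp
    have hPccard : Nat.card ↥Pc = p ^ 2 := by
      rw [← hP2]; exact Nat.card_congr eqv.toEquiv
    have h1 : p ^ 2 * p ∣ Nat.card ↥Pc * Pc.index := by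
      rw [hPccard]
      exact mul_dvd_mul dvd_rfl hpm
    rw [Subgroup.card_mul_index] at h1
    have h2 : Nat.card ↥C ∣ Nat.card G := Subgroup.card_subgroup_dvd_card C
    rw [pow_succ]
    exact h1.trans h2
  -- evaluation of V on nontrivial elements of N
  have hVeval : ∀ c : ↥C, (c : G) ∈ N → c ≠ 1 → V c ≠ 1 := by
    intro c hcN hc1
    have hkey : ∀ (k : ℕ) (g₀ : ↥C), g₀⁻¹ * c ^ k * g₀ ∈ Pc → g₀⁻¹ * c ^ k * g₀ = c ^ k := by
      intro k g₀ _
      have hck : ((c ^ k : ↥C) : G) ∈ N := by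
        have : ((c : G)) ^ k ∈ N := N.pow_mem hcN k
        simpa using this
      have hcomm2 : ((c ^ k : ↥C) : G) * (g₀ : G) = (g₀ : G) * ((c ^ k : ↥C) : G) := by
        have := g₀.2
        rw [Subgroup.mem_centralizer_iff] at this
        exact this _ hck
      apply Subtype.ext
      push_cast
      push_cast at hcomm2
      rw [mul_assoc, hcomm2, ← mul_assoc, inv_mul_cancel, one_mul]
    rw [hV_def, φ.transfer_eq_pow c hkey]
    intro hone
    rw [hφ_def] at hone
    simp only [MonoidHom.comp_apply, MulEquiv.coe_toMonoidHom, QuotientGroup.mk'_apply] at hone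
    rw [QuotientGroup.eq_one_iff] at hone
    rw [Subgroup.mem_subgroupOf] at hone
    rw [Subgroup.subgroupOfEquivOfLe_apply_coe] at hone
    -- hone : (↑(c ^ Pc.index) : G) ∈ K
    have hy : ((c : G)) ^ m ∈ K := by
      have : ((c ^ Pc.index : ↥C) : G) = (c : G) ^ m := by push_cast; rw [hm_def]
      rwa [this] at hone
    -- orderOf ↑c = p
    have hc1' : (c : G) ≠ 1 := fun h => hc1 (Subtype.ext h)
    have hcord : orderOf (c : G) = p := by
      have h1 : orderOf (c : G) ∣ p := hNcard ▸ Subgroup.orderOf_dvd_natCard N hcN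
      rcases (Nat.dvd_prime hp).mp h1 with h | h
      · exact absurd (orderOf_eq_one_iff.mp h) hc1'
      · exact h
    have hy1 : ((c : G)) ^ m ≠ 1 := by
      intro h
      exact hpm (hcord ▸ orderOf_dvd_of_pow_eq_one h)
    have hyN : ((c : G)) ^ m ∈ N := N.pow_mem hcN m
    have hyord : orderOf ((c : G) ^ m) = p := by
      have h1 : orderOf ((c : G) ^ m) ∣ p := hNcard ▸ Subgroup.orderOf_dvd_natCard N hyN
      rcases (Nat.dvd_prime hp).mp h1 with h | h
      · exact absurd (orderOf_eq_one_iff.mp h) hy1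
      · exact h
    have hKeq : Subgroup.zpowers ((c : G) ^ m) = K := by
      apply Subgroup.eq_of_le_of_card_ge (Subgroup.zpowers_le.mpr hy)
      rw [hKcard, Nat.card_zpowers, hyord]
    have hxNmem : x ∈ N := by
      have h1 : x ∈ K := Subgroup.mem_zpowers x
      rw [← hKeq] at h1
      exact (Subgroup.zpowers_le.mpr hyN) h1
    exact hxN hxNmem
  -- build the isomorphism N ≃ A through V
  set incl : ↥N →* ↥C := Subgroup.inclusion hNC with hincl_def
  set ψ : ↥N →* A := V.comp incl with hψ_def
  have hψinj : Function.Injective ψ := by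
    refine (injective_iff_map_eq_one ψ).mpr ?_
    intro n hn
    by_contra hn1
    have h1 : ((incl n : ↥C) : G) ∈ N := by
      have : ((incl n : ↥C) : G) = (n : G) := rfl
      rw [this]; exact n.2
    have h2 : incl n ≠ 1 := by
      intro h
      apply hn1
      apply Subtype.ext
      have h3 : ((incl n : ↥C) : G) = 1 := by rw [h]; rfl
      exact h3
    exact hVeval (incl n) h1 h2 hn
  have hψbij : Function.Bijective ψ :=
    (Nat.bijective_iff_injective_and_card ψ).mpr ⟨hψinj, by rw [hNcard, hAcard]⟩
  set eA : ↥N ≃* A := MulEquiv.ofBijective ψ hψbij with heA_def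
  refine ⟨eA.symm.toMonoidHom.comp V, ?_⟩
  intro c hc
  have h1 : V (incl ⟨(c : G), hc⟩) = V c := by
    congr 1
  have h2 : (eA.symm.toMonoidHom.comp V) c = ⟨(c : G), hc⟩ := by
    show eA.symm (V c) = _
    rw [← h1]
    exact eA.symm_apply_apply ⟨(c : G), hc⟩
  rw [h2]


end FiniteAux
end SylowFrattiniAux


/-- If `G` has cube-free order and the prime `p` divides `|Φ(G)|`, then the Sylow
`p`-subgroup of `G` is cyclic of order `p^2`. -/
theorem sylow_cyclic_of_dvd_frattini (G : Type*) [Group G] [Finite G]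
    (hcf : ∀ r : ℕ, r.Prime → ¬ r ^ 3 ∣ Nat.card G)
    (p : ℕ) (hp : p.Prime) (hdvd : p ∣ Nat.card (frattini G)) :
    ∀ P : Sylow p G, IsCyclic (P : Subgroup G) ∧
      Nat.card (P : Subgroup G) = p ^ 2 := by
  haveI hpf : Fact p.Prime := ⟨hp⟩
  intro P
  obtain ⟨hcardP, N, hNnorm, hNF, hNP, hNcard⟩ := sylow_card_aux hcf hdvd P
  refine ⟨?_, hcardP⟩
  by_contra hnc
  haveI := hNnorm
  haveI := centralizer_normal' N
  obtain ⟨hpCi, π, hπ⟩ := exists_pi hcf N hNcard P hcardP hNP hnc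
  have hNC : N ≤ Subgroup.centralizer (N : Set G) := by
    intro n hn
    rw [Subgroup.mem_centralizer_iff]
    intro m hm
    haveI : IsCyclic ↥N := isCyclic_of_prime_card hNcard
    have h := (IsCyclic.commGroup (α := ↥N)).mul_comm (⟨m, hm⟩ : ↥N) (⟨n, hn⟩ : ↥N)
    exact congrArg Subtype.val h
  have hcent : ∀ (c₀ : ↥(Subgroup.centralizer (N : Set G))) (n : G), n ∈ N →
      (c₀ : G) * n * (c₀ : G)⁻¹ = n := by
    intro c₀ n hn
    have h : (c₀ : G) ∈ Subgroup.centralizer (N : Set G) := c₀.2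
    rw [Subgroup.mem_centralizer_iff] at h
    have h2 := h n hn
    rw [← h2, mul_assoc, mul_inv_cancel, mul_one]
  obtain ⟨D, hDne, hDsup⟩ := exists_proper_supplement N (Subgroup.centralizer (N : Set G))
    hNcard hpCi hNC hcent π hπ
  have h1 : D ⊔ frattini G = ⊤ := by
    rw [eq_top_iff, ← hDsup]
    apply sup_le
    · exact le_trans hNF le_sup_right
    · exact le_sup_left
  exact hDne (frattini_nongenerating h1)
end
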